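/- arXiv:1709.03519 — 3 statements merged into one kernel-verified Lean document; each statement's English description precedes it below -/
import Mathlib

section
/- Let V and Q be real Hilbert spaces, a : V × V → ℝ a continuous bilinear form, b : V × Q → ℝ a continuous bilinear form, and J : V → ℝ, F : Q → ℝ continuous linear functionals. If a is coercive on the kernel K = {v ∈ V : ∀ q, b(v,q) = 0} and b satisfies the inf-sup condition (∃ β > 0, ∀ q ∈ Q, sup_{v ≠ 0} b(v,q)/‖v‖ ≥ β‖q‖), then the saddle-point problem — find (u,p) ∈ V × Q with a(u,v) + b(v,p) = J(v) for all v ∈ V and b(u,q) = F(q) for all q ∈ Q — has a unique solution. -/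
/-!
Write `b v q = ⟪S v, q⟫` for an operator `S : V →L[ℝ] Q`. The inf-sup condition says that `S†` is
bounded below, so `S†` is injective with closed range `(ker S)ᗮ`; moreover `S S†` is then bounded
below and self-adjoint, hence surjective, and so is `S`.

Existence: lift `F` to some `u₀`, then correct it inside `K = ker S` by Lax–Milgram so that the
residual `J - a(u, ·)` vanishes on `K`. Its Riesz representative lies in `Kᗮ = range S†`, which
yields `p`. Uniqueness: coercivity on `K` forces the two `u`'s to agree, and then injectivity of
`S†` forces the two `p`'s to agree.
-/

open InnerProductSpace RealInnerProductSpace ContinuousLinearMap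
open scoped InnerProduct

section BoundedBilinear

variable {𝕜 E F G : Type*} [NontriviallyNormedField 𝕜]
  [SeminormedAddCommGroup E] [NormedSpace 𝕜 E] [SeminormedAddCommGroup F] [NormedSpace 𝕜 F]
  [SeminormedAddCommGroup G] [NormedSpace 𝕜 G]

noncomputable def ContinuousLinearMap.ofBoundedBilinear (f : E → F → G)
    (h₁ : ∀ y, IsLinearMap 𝕜 (f · y)) (h₂ : ∀ x, IsLinearMap 𝕜 (f x)) (C : ℝ)
    (hC : ∀ x y, ‖f x y‖ ≤ C * ‖x‖ * ‖y‖) : E →L[𝕜] F →L[𝕜] G :=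
  (LinearMap.mk₂ 𝕜 f (fun x x' y => (h₁ y).map_add x x') (fun c x y => (h₁ y).map_smul c x)
    (fun x y y' => (h₂ x).map_add y y') (fun c x y => (h₂ x).map_smul c y)).mkContinuous₂ C hC

end BoundedBilinear

namespace InnerProductSpace

variable {E F : Type*} [NormedAddCommGroup E] [InnerProductSpace ℝ E]
  [NormedAddCommGroup F] [InnerProductSpace ℝ F] [CompleteSpace F]

noncomputable def continuousLinearMapOfBilin₂ (B : E →L[ℝ] F →L[ℝ] ℝ) : E →L[ℝ] F :=
  (toDual ℝ F).symm.toLinearIsometry.toContinuousLinearMap ∘L B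

@[simp]
theorem inner_continuousLinearMapOfBilin₂_apply (B : E →L[ℝ] F →L[ℝ] ℝ) (x : E) (y : F) :
    ⟪continuousLinearMapOfBilin₂ B x, y⟫_ℝ = B x y :=
  toDual_symm_apply

end InnerProductSpace

theorem iSup_inner_div_norm_le_norm {E : Type*} [NormedAddCommGroup E]
    [InnerProductSpace ℝ E] (w : E) :
    ⨆ v : {v : E // v ≠ 0}, ⟪(v : E), w⟫_ℝ / ‖(v : E)‖ ≤ ‖w‖ :=
  Real.iSup_le (fun _ => div_le_of_le_mul₀ (norm_nonneg _) (norm_nonneg _)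
    ((real_inner_le_norm _ _).trans_eq (mul_comm _ _))) (norm_nonneg w)

theorem ContinuousLinearMap.antilipschitzWith_of_bounded_below {𝕜 E F : Type*}
    [NontriviallyNormedField 𝕜] [SeminormedAddCommGroup E] [NormedSpace 𝕜 E]
    [SeminormedAddCommGroup F] [NormedSpace 𝕜 F] (T : E →L[𝕜] F) {c : ℝ} (hc : 0 < c)
    (h : ∀ x, c * ‖x‖ ≤ ‖T x‖) : AntilipschitzWith (c⁻¹).toNNReal T :=
  T.antilipschitz_of_bound fun x => by
    rw [Real.coe_toNNReal _ (inv_nonneg.2 hc.le), inv_mul_eq_div, le_div_iff₀ hc, mul_comm]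
    exact h x

namespace ContinuousLinearMap

variable {𝕜 E F : Type*} [RCLike 𝕜]
  [NormedAddCommGroup E] [InnerProductSpace 𝕜 E] [CompleteSpace E]
  [NormedAddCommGroup F] [InnerProductSpace 𝕜 F] [CompleteSpace F]

theorem range_adjoint_eq_orthogonal_ker (T : E →L[𝕜] F) (h : IsClosed (T†.range : Set E)) :
    T†.range = T.kerᗮ := by
  rw [orthogonal_ker, h.submodule_topologicalClosure_eq]

theorem surjective_of_adjoint_bounded_below (T : E →L[𝕜] F) {c : ℝ} (hc : 0 < c)
    (h : ∀ y, c * ‖y‖ ≤ ‖(T†) y‖) : Function.Surjective T := by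
  set A := T ∘L T†
  have hA : ∀ y, c ^ 2 * ‖y‖ ≤ ‖A y‖ := by
    intro y
    rcases (norm_nonneg y).eq_or_lt with hy | hy
    · rw [← hy, mul_zero]; exact norm_nonneg _
    refine le_of_mul_le_mul_right ?_ hy
    calc c ^ 2 * ‖y‖ * ‖y‖ = (c * ‖y‖) ^ 2 := by ring
      _ ≤ ‖(T†) y‖ ^ 2 := pow_le_pow_left₀ (by positivity) (h y) 2
      _ = RCLike.re ⟪A y, y⟫_𝕜 := by
        rw [← inner_self_eq_norm_sq (𝕜 := 𝕜), adjoint_inner_left, inner_re_symm]; rfl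
      _ ≤ ‖A y‖ * ‖y‖ := (RCLike.re_le_norm _).trans (norm_inner_le_norm _ _)
  have hA_anti := A.antilipschitzWith_of_bounded_below (by positivity) hA
  have : CompleteSpace A.range := (hA_anti.isClosed_range A.uniformContinuous).completeSpace_coe
  have hrange : A.range = ⊤ := by
    rw [← Submodule.orthogonal_eq_bot_iff, orthogonal_range, LinearMap.ker_eq_bot]
    have hA_selfAdjoint : A† = A := by simp [A, adjoint_comp]
    rw [hA_selfAdjoint]
    exact hA_anti.injective
  intro y
  obtain ⟨x, hx⟩ := LinearMap.range_eq_top.1 hrange y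
  exact ⟨(T†) x, hx⟩

end ContinuousLinearMap

namespace IsCoercive

variable {V : Type*} [NormedAddCommGroup V] [InnerProductSpace ℝ V] {B : V →L[ℝ] V →L[ℝ] ℝ}

theorem eq_zero_of_apply_self_eq_zero (hB : IsCoercive B) {v : V} (hv : B v v = 0) : v = 0 := by
  obtain ⟨C, hC, hcoer⟩ := hB
  by_contra hne
  have : 0 < C * ‖v‖ * ‖v‖ := by have := norm_pos_iff.2 hne; positivity
  linarith [hcoer v]

theorem exists_forall_apply_eq [CompleteSpace V] (hB : IsCoercive B) (f : V →L[ℝ] ℝ) :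
    ∃ w, ∀ v, B w v = f v :=
  ⟨hB.continuousLinearEquivOfBilin.symm ((toDual ℝ V).symm f), fun v => by
    rw [← hB.continuousLinearEquivOfBilin_apply, ContinuousLinearEquiv.apply_symm_apply,
      toDual_symm_apply]⟩

end IsCoercive

section SaddlePoint

variable {V Q : Type*} [NormedAddCommGroup V] [InnerProductSpace ℝ V] [CompleteSpace V]
  [NormedAddCommGroup Q] [InnerProductSpace ℝ Q] [CompleteSpace Q]

theorem exists_saddlePoint (A : V →L[ℝ] V →L[ℝ] ℝ) (S : V →L[ℝ] Q)
    (hA : IsCoercive (A.bilinearComp S.ker.subtypeL S.ker.subtypeL)) {β : ℝ} (hβ : 0 < β)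
    (hS : ∀ q, β * ‖q‖ ≤ ‖(S†) q‖) (J : V →L[ℝ] ℝ) (F : Q →L[ℝ] ℝ) :
    ∃ u p, (∀ v, A u v + ⟪S v, p⟫_ℝ = J v) ∧ ∀ q, ⟪S u, q⟫_ℝ = F q := by
  have : CompleteSpace S.ker := S.isClosed_ker.completeSpace_coe
  obtain ⟨u₀, hu₀⟩ := S.surjective_of_adjoint_bounded_below hβ hS ((toDual ℝ Q).symm F)
  obtain ⟨w, hw⟩ := hA.exists_forall_apply_eq ((J - A u₀) ∘L S.ker.subtypeL)
  set u := u₀ + w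
  have hSu : S u = S u₀ := by simp [u]
  have hres : (toDual ℝ V).symm (J - A u) ∈ S.kerᗮ := by
    refine (Submodule.mem_orthogonal' _ _).2 fun v hv => ?_
    have hwv : A w v = J v - A u₀ v := hw ⟨v, hv⟩
    rw [toDual_symm_apply, sub_apply, map_add, add_apply, hwv]
    ring
  have hclosed := ((S†).antilipschitzWith_of_bounded_below hβ hS).isClosed_range
    (S†).uniformContinuous
  rw [← S.range_adjoint_eq_orthogonal_ker hclosed] at hres
  obtain ⟨p, hp⟩ := hres
  refine ⟨u, p, fun v => ?_, fun q => by rw [hSu, hu₀, toDual_symm_apply]⟩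
  rw [← adjoint_inner_right, show (S†) p = _ from hp, real_inner_comm, toDual_symm_apply,
    sub_apply]
  ring

theorem saddlePoint_unique {A : V →L[ℝ] V →L[ℝ] ℝ} {S : V →L[ℝ] Q}
    (hA : IsCoercive (A.bilinearComp S.ker.subtypeL S.ker.subtypeL)) {β : ℝ} (hβ : 0 < β)
    (hS : ∀ q, β * ‖q‖ ≤ ‖(S†) q‖) {u u' : V} {p p' : Q}
    (hJ : ∀ v, A u v + ⟪S v, p⟫_ℝ = A u' v + ⟪S v, p'⟫_ℝ) (hF : S u = S u') :
    u = u' ∧ p = p' := by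
  have hres : ∀ v, A (u - u') v = ⟪v, (S†) (p' - p)⟫_ℝ := fun v => by
    rw [adjoint_inner_right, inner_sub_right, map_sub, sub_apply]
    linarith [hJ v]
  have hker : u - u' ∈ S.ker := by simp [hF]
  have hu : u - u' = 0 := by
    refine congrArg Subtype.val (hA.eq_zero_of_apply_self_eq_zero (v := ⟨u - u', hker⟩) ?_)
    change A (u - u') (u - u') = 0
    rw [hres, adjoint_inner_right, show S (u - u') = 0 from hker, inner_zero_left]
  have hp : (S†) (p' - p) = 0 := ext_inner_left ℝ fun v => by
    rw [← hres, hu, map_zero, zero_apply, inner_zero_right]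
  refine ⟨sub_eq_zero.1 hu, (sub_eq_zero.1 ?_).symm⟩
  exact ((S†).antilipschitzWith_of_bounded_below hβ hS).injective (hp.trans (map_zero _).symm)

theorem existsUnique_saddlePoint (A : V →L[ℝ] V →L[ℝ] ℝ) (S : V →L[ℝ] Q)
    (hA : IsCoercive (A.bilinearComp S.ker.subtypeL S.ker.subtypeL)) {β : ℝ} (hβ : 0 < β)
    (hS : ∀ q, β * ‖q‖ ≤ ‖(S†) q‖) (J : V →L[ℝ] ℝ) (F : Q →L[ℝ] ℝ) :
    ∃! up : V × Q, (∀ v, A up.1 v + ⟪S v, up.2⟫_ℝ = J v) ∧ ∀ q, ⟪S up.1, q⟫_ℝ = F q := by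
  obtain ⟨u, p, hJ, hF⟩ := exists_saddlePoint A S hA hβ hS J F
  refine ⟨(u, p), ⟨hJ, hF⟩, fun ⟨u', p'⟩ ⟨hJ', hF'⟩ => ?_⟩
  obtain ⟨rfl, rfl⟩ := saddlePoint_unique hA hβ hS (fun v => (hJ' v).trans (hJ v).symm)
    (ext_inner_right ℝ fun q => (hF' q).trans (hF q).symm)
  rfl

end SaddlePoint

/-- Babuška–Brezzi well-posedness of the abstract saddle-point problem:
if the continuous bilinear form `a` is coercive on the kernel of `b` and `b`
satisfies the inf-sup condition, then for any continuous linear functionals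
`J`, `F` the saddle-point problem has a unique solution `(u, p)`. -/
theorem babuska_brezzi_wellposedness
    {V Q : Type*}
    [NormedAddCommGroup V] [InnerProductSpace ℝ V] [CompleteSpace V]
    [NormedAddCommGroup Q] [InnerProductSpace ℝ Q] [CompleteSpace Q]
    (a : V → V → ℝ) (b : V → Q → ℝ)
    (ha_lin₁ : ∀ v, IsLinearMap ℝ fun u => a u v)
    (ha_lin₂ : ∀ u, IsLinearMap ℝ (a u))
    (ha_cont : ∃ Ca : ℝ, ∀ u v, |a u v| ≤ Ca * ‖u‖ * ‖v‖)
    (hb_lin₁ : ∀ q, IsLinearMap ℝ fun v => b v q)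
    (hb_lin₂ : ∀ v, IsLinearMap ℝ (b v))
    (hb_cont : ∃ Cb : ℝ, ∀ v q, |b v q| ≤ Cb * ‖v‖ * ‖q‖)
    (J : V →L[ℝ] ℝ) (F : Q →L[ℝ] ℝ)
    -- coercivity of `a` on the kernel `K = {v : ∀ q, b v q = 0}`
    (hcoer : ∃ α : ℝ, 0 < α ∧ ∀ v : V, (∀ q : Q, b v q = 0) → α * ‖v‖ ^ 2 ≤ a v v)
    -- inf-sup condition on `b`
    (hinfsup : ∃ β : ℝ, 0 < β ∧ ∀ q : Q,
      β * ‖q‖ ≤ ⨆ v : {v : V // v ≠ 0}, b (v : V) q / ‖(v : V)‖) :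
    ∃! up : V × Q,
      (∀ v : V, a up.1 v + b v up.2 = J v) ∧ (∀ q : Q, b up.1 q = F q) := by
  obtain ⟨Ca, hCa⟩ := ha_cont
  obtain ⟨Cb, hCb⟩ := hb_cont
  obtain ⟨α, hα, hcoer⟩ := hcoer
  obtain ⟨β, hβ, hinfsup⟩ := hinfsup
  set A := ofBoundedBilinear a ha_lin₁ ha_lin₂ Ca hCa
  set B := ofBoundedBilinear b hb_lin₁ hb_lin₂ Cb hCb
  set S := continuousLinearMapOfBilin₂ B
  have hb : ∀ v q, b v q = ⟪S v, q⟫_ℝ := fun v q =>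
    (inner_continuousLinearMapOfBilin₂_apply B v q).symm
  have hA : IsCoercive (A.bilinearComp S.ker.subtypeL S.ker.subtypeL) := by
    refine ⟨α, hα, fun v => ?_⟩
    rw [mul_assoc, ← sq]
    refine hcoer v fun q => ?_
    rw [hb, show S v = 0 from v.2, inner_zero_left]
  have hS : ∀ q, β * ‖q‖ ≤ ‖(S†) q‖ := fun q => by
    refine (hinfsup q).trans ?_
    simp only [hb, ← adjoint_inner_right]
    exact iSup_inner_div_norm_le_norm _
  simp only [hb]
  exact existsUnique_saddlePoint A S hA hβ hS J F
end

section
/- Let H be a real Hilbert space, W a closed subspace with orthogonal projection Π₀ and T₀ = I − Π₀, and let a(u,v) = ⟪u,v⟫. Suppose s : H × H → ℝ is a symmetric positive semidefinite bilinear form such that there exist constants 0 < ι₊ ≤ ι⁺ with ι₊ a(T₀v, T₀v) ≤ s(T₀v, T₀v) ≤ ι⁺ a(T₀v, T₀v) for all v ∈ H. Then the bilinear form a_h(u,v) := a(Π₀u, Π₀v) + s(T₀u, T₀v) satisfies min(1, ι₊) a(v,v) ≤ a_h(v,v) ≤ max(1, ι⁺) a(v,v) for all v ∈ H. -/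
open scoped RealInnerProductSpace

theorem Submodule.real_inner_self_eq_starProjection_add_sub {H : Type*} [NormedAddCommGroup H]
    [InnerProductSpace ℝ H] (W : Submodule ℝ H) [W.HasOrthogonalProjection] (v : H) :
    ⟪v, v⟫ = ⟪W.starProjection v, W.starProjection v⟫
      + ⟪v - W.starProjection v, v - W.starProjection v⟫ := by
  have horth : ⟪W.starProjection v, v - W.starProjection v⟫ = 0 := by
    rw [real_inner_comm]
    exact W.starProjection_inner_eq_zero v _ (W.starProjection_apply_mem v)
  conv_lhs => rw [← add_sub_cancel (W.starProjection v) v]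
  rw [real_inner_add_add_self, horth, mul_zero, add_zero]

theorem min_one_mul_add_le_add {p t σ ι : ℝ} (hp : 0 ≤ p) (ht : 0 ≤ t) (h : ι * t ≤ σ) :
    min 1 ι * (p + t) ≤ p + σ := by
  nlinarith [min_le_left 1 ι, min_le_right 1 ι]

theorem add_le_max_one_mul_add {p t σ ι : ℝ} (hp : 0 ≤ p) (ht : 0 ≤ t) (h : σ ≤ ι * t) :
    p + σ ≤ max 1 ι * (p + t) := by
  nlinarith [le_max_left 1 ι, le_max_right 1 ι]

theorem vem_spectral_equivalence_general
    {H : Type*} [NormedAddCommGroup H] [InnerProductSpace ℝ H]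
    (W : Submodule ℝ H) [W.HasOrthogonalProjection]
    (s : H → H → ℝ)
    (ι₁ ι₂ : ℝ)
    (P₀ : H → H) (hP₀ : ∀ v, P₀ v = ((W.orthogonalProjectionOnto v : W) : H))
    (T₀ : H → H) (hT₀ : ∀ v, T₀ v = v - P₀ v)
    (hequiv : ∀ v : H,
      ι₁ * ⟪T₀ v, T₀ v⟫ ≤ s (T₀ v) (T₀ v) ∧ s (T₀ v) (T₀ v) ≤ ι₂ * ⟪T₀ v, T₀ v⟫) :
    ∀ v : H,
      min 1 ι₁ * ⟪v, v⟫ ≤ ⟪P₀ v, P₀ v⟫ + s (T₀ v) (T₀ v) ∧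
      ⟪P₀ v, P₀ v⟫ + s (T₀ v) (T₀ v) ≤ max 1 ι₂ * ⟪v, v⟫ := by
  intro v
  have hsplit : ⟪v, v⟫ = ⟪P₀ v, P₀ v⟫ + ⟪T₀ v, T₀ v⟫ := by
    rw [hT₀, hP₀]
    exact W.real_inner_self_eq_starProjection_add_sub v
  obtain ⟨hlower, hupper⟩ := hequiv v
  rw [hsplit]
  exact ⟨min_one_mul_add_le_add real_inner_self_nonneg real_inner_self_nonneg hlower,
    add_le_max_one_mul_add real_inner_self_nonneg real_inner_self_nonneg hupper⟩

/-- Spectral equivalence of the VEM bilinear form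
`a_h(u,v) = a(Π₀u, Π₀v) + s(T₀u, T₀v)` with `a(u,v) = ⟪u,v⟫`:
if `ι₁ a(T₀v,T₀v) ≤ s(T₀v,T₀v) ≤ ι₂ a(T₀v,T₀v)` then
`min(1,ι₁) a(v,v) ≤ a_h(v,v) ≤ max(1,ι₂) a(v,v)`. -/
theorem vem_spectral_equivalence
    {H : Type*} [NormedAddCommGroup H] [InnerProductSpace ℝ H] [CompleteSpace H]
    (W : Submodule ℝ H) [W.HasOrthogonalProjection]
    (s : H → H → ℝ)
    (hs_lin₁ : ∀ v, IsLinearMap ℝ fun u => s u v)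
    (hs_lin₂ : ∀ u, IsLinearMap ℝ (s u))
    (hs_symm : ∀ u v, s u v = s v u)
    (hs_psd : ∀ v, 0 ≤ s v v)
    (ι₁ ι₂ : ℝ) (h₁ : 0 < ι₁) (h₁₂ : ι₁ ≤ ι₂)
    (P₀ : H → H) (hP₀ : ∀ v, P₀ v = ((W.orthogonalProjectionOnto v : W) : H))
    (T₀ : H → H) (hT₀ : ∀ v, T₀ v = v - P₀ v)
    (hequiv : ∀ v : H,
      ι₁ * ⟪T₀ v, T₀ v⟫ ≤ s (T₀ v) (T₀ v) ∧ s (T₀ v) (T₀ v) ≤ ι₂ * ⟪T₀ v, T₀ v⟫) :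
    ∀ v : H,
      min 1 ι₁ * ⟪v, v⟫ ≤ ⟪P₀ v, P₀ v⟫ + s (T₀ v) (T₀ v) ∧
      ⟪P₀ v, P₀ v⟫ + s (T₀ v) (T₀ v) ≤ max 1 ι₂ * ⟪v, v⟫ :=
  vem_spectral_equivalence_general W s ι₁ ι₂ P₀ hP₀ T₀ hT₀ hequiv
end

section
/- Let a : V × V → ℝ be symmetric, continuous and coercive, b : V × Q → ℝ continuous and inf-sup stable on closed subspaces V_h ⊆ V, Q_h ⊆ Q (with inf-sup constant β_h > 0 uniform), and let a_h be a symmetric bilinear form on V_h with c₁ a(v,v) ≤ a_h(v,v) ≤ c₂ a(v,v) for all v ∈ V_h, where 0 < c₁ ≤ c₂. Then the discrete saddle-point problem — find (u_h, p_h) ∈ V_h × Q_h with a_h(u_h,v) + b(v,p_h) = J(v) and b(u_h,q) = F(q) for all (v,q) ∈ V_h × Q_h — has a unique solution for any continuous linear functionals J, F. -/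
/-!
Brezzi's argument. By Lax–Milgram a coercive form `A` identifies `X` with its dual, so the first
equation gives `u = A⁻¹ (j - Bᵀ p)`; substituting into the second leaves the Schur complement
equation `B A⁻¹ Bᵀ p = B A⁻¹ j - f`. With `x = A⁻¹ Bᵀ q` the Schur form at `(q, q)` equals `A x x`,
and the inf-sup condition gives `β ‖q‖ ≤ ‖Bᵀ q‖ = ‖A x‖`, so this form is coercive and Lax–Milgram
applies again. Uniqueness: a homogeneous solution has `A u u = -B u p = 0`, so `u = 0`, and then
`Bᵀ p = 0`, so `p = 0` by inf-sup. On `V_h`, spectral equivalence makes `a_h` coercive, and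
Cauchy–Schwarz for the positive symmetric form `a_h` makes it bounded.
-/

open InnerProductSpace

namespace LinearMap

variable {R M N P : Type*} [CommSemiring R] [AddCommMonoid M] [AddCommMonoid N] [AddCommMonoid P]
  [Module R M] [Module R N] [Module R P]

def mk₂OfIsLinearMap (f : M → N → P) (h₁ : ∀ n, IsLinearMap R fun m => f m n)
    (h₂ : ∀ m, IsLinearMap R (f m)) : M →ₗ[R] N →ₗ[R] P :=
  mk₂ R f (fun _ _ n => (h₁ n).map_add _ _) (fun c _ n => (h₁ n).map_smul c _)
    (fun m _ _ => (h₂ m).map_add _ _) (fun c m _ => (h₂ m).map_smul c _)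

@[simp]
theorem mk₂OfIsLinearMap_apply (f : M → N → P) (h₁ : ∀ n, IsLinearMap R fun m => f m n)
    (h₂ : ∀ m, IsLinearMap R (f m)) (m : M) (n : N) : mk₂OfIsLinearMap f h₁ h₂ m n = f m n :=
  rfl

end LinearMap

theorem LinearMap.BilinForm.abs_apply_le_of_apply_self_le {E : Type*} [SeminormedAddCommGroup E]
    [NormedSpace ℝ E] {B : LinearMap.BilinForm ℝ E} (hB : LinearMap.IsSymm B) (hs : ∀ x, 0 ≤ B x x)
    {C : ℝ} (hC : ∀ x, B x x ≤ C * ‖x‖ ^ 2) (x y : E) : |B x y| ≤ C * ‖x‖ * ‖y‖ := by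
  have hCx : 0 ≤ C * ‖x‖ ^ 2 := (hs x).trans (hC x)
  have hCxy : 0 ≤ C * ‖x‖ * ‖y‖ := by
    rcases (norm_nonneg x).eq_or_lt with hx | hx
    · simp [← hx]
    · have : 0 ≤ C := nonneg_of_mul_nonneg_left hCx (by positivity)
      positivity
  refine abs_le_of_sq_le_sq ?_ hCxy
  calc B x y ^ 2 ≤ B x x * B y y := B.apply_sq_le_of_symm hs hB x y
    _ ≤ C * ‖x‖ ^ 2 * (C * ‖y‖ ^ 2) := mul_le_mul (hC x) (hC y) (hs y) hCx
    _ = (C * ‖x‖ * ‖y‖) ^ 2 := by ring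

theorem ContinuousLinearMap.iSup_apply_div_norm_le_opNorm {E : Type*} [SeminormedAddCommGroup E]
    [NormedSpace ℝ E] (φ : E →L[ℝ] ℝ) : ⨆ v : {v : E // v ≠ 0}, φ v / ‖(v : E)‖ ≤ ‖φ‖ :=
  Real.iSup_le (fun v => div_le_of_le_mul₀ (norm_nonneg _) (norm_nonneg _)
    ((le_abs_self _).trans (φ.le_opNorm v))) (norm_nonneg _)

namespace IsCoercive

variable {X : Type*} [NormedAddCommGroup X] [InnerProductSpace ℝ X] {A : X →L[ℝ] X →L[ℝ] ℝ}

theorem eq_zero_of_apply_self_le_zero (hA : IsCoercive A) {x : X} (hx : A x x ≤ 0) : x = 0 := by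
  obtain ⟨c, hc, hcoer⟩ := hA
  by_contra hx₀
  have := norm_pos_iff.mpr hx₀
  exact absurd ((hcoer x).trans hx) (not_le.mpr (by positivity))

variable [CompleteSpace X]

noncomputable def dualEquiv (hA : IsCoercive A) : X ≃L[ℝ] (X →L[ℝ] ℝ) :=
  hA.continuousLinearEquivOfBilin.trans (toDual ℝ X).toContinuousLinearEquiv

@[simp]
theorem dualEquiv_apply (hA : IsCoercive A) (x : X) : hA.dualEquiv x = A x := by
  ext y
  exact hA.continuousLinearEquivOfBilin_apply x y

@[simp]
theorem apply_dualEquiv_symm (hA : IsCoercive A) (φ : X →L[ℝ] ℝ) : A (hA.dualEquiv.symm φ) = φ := by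
  rw [← hA.dualEquiv_apply, ContinuousLinearEquiv.apply_symm_apply]

end IsCoercive

section SaddlePoint

variable {X M : Type*} [NormedAddCommGroup X] [InnerProductSpace ℝ X]
  [NormedAddCommGroup M] [InnerProductSpace ℝ M]
  {A : X →L[ℝ] X →L[ℝ] ℝ} {B : X →L[ℝ] M →L[ℝ] ℝ} {β : ℝ}

variable (A B) in
noncomputable def saddlePointOp : X × M →L[ℝ] (X →L[ℝ] ℝ) × (M →L[ℝ] ℝ) :=
  (A.coprod B.flip).prod (B.comp (ContinuousLinearMap.fst ℝ X M))

@[simp]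
theorem saddlePointOp_apply (u : X) (p : M) :
    saddlePointOp A B (u, p) = (A u + B.flip p, B u) :=
  rfl

theorem injective_saddlePointOp (hA : IsCoercive A) (hβ : 0 < β)
    (hB : ∀ q, β * ‖q‖ ≤ ‖B.flip q‖) : Function.Injective (saddlePointOp A B) := by
  rw [injective_iff_map_eq_zero]
  rintro ⟨u, p⟩ h
  obtain ⟨h₁, h₂⟩ := Prod.ext_iff.mp h
  simp only [saddlePointOp_apply, Prod.fst_zero, Prod.snd_zero] at h₁ h₂
  have hu : u = 0 := by
    refine hA.eq_zero_of_apply_self_le_zero (le_of_eq ?_)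
    have h₁u := congr($h₁ u)
    have h₂p := congr($h₂ p)
    simp only [add_apply, ContinuousLinearMap.flip_apply, zero_apply] at h₁u h₂p
    linarith
  have hp : p = 0 := by
    have hBp : B.flip p = 0 := by simpa [hu] using h₁
    have : β * ‖p‖ ≤ 0 := by simpa [hBp] using hB p
    exact norm_le_zero_iff.mp (nonpos_of_mul_nonpos_right this hβ)
  simp [hu, hp]

variable [CompleteSpace X]

variable (B) in
noncomputable def schurComplement (hA : IsCoercive A) : M →L[ℝ] M →L[ℝ] ℝ :=
  B ∘L (hA.dualEquiv.symm : (X →L[ℝ] ℝ) →L[ℝ] X) ∘L B.flip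

theorem schurComplement_apply (hA : IsCoercive A) (p q : M) :
    schurComplement B hA p q = B (hA.dualEquiv.symm (B.flip p)) q :=
  rfl

theorem isCoercive_schurComplement (hA : IsCoercive A) (hβ : 0 < β)
    (hB : ∀ q, β * ‖q‖ ≤ ‖B.flip q‖) : IsCoercive (schurComplement B hA) := by
  obtain ⟨c, hc, hcoer⟩ := id hA
  -- `+ 1` keeps `K` positive when `A = 0`
  set K := ‖A‖ + 1
  have hK : 0 < K := by positivity
  refine ⟨c * β ^ 2 / K ^ 2, by positivity, fun q => ?_⟩
  set x := hA.dualEquiv.symm (B.flip q)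
  have hAx : A x = B.flip q := hA.apply_dualEquiv_symm _
  have hSqq : schurComplement B hA q q = A x x := by
    rw [schurComplement_apply, hAx, ContinuousLinearMap.flip_apply]
  have hq : β * ‖q‖ ≤ K * ‖x‖ :=
    calc β * ‖q‖ ≤ ‖A x‖ := hAx ▸ hB q
      _ ≤ ‖A‖ * ‖x‖ := A.le_opNorm x
      _ ≤ K * ‖x‖ := by gcongr; linarith
  calc c * β ^ 2 / K ^ 2 * ‖q‖ * ‖q‖ = c * (β * ‖q‖) ^ 2 / K ^ 2 := by ring
    _ ≤ c * (K * ‖x‖) ^ 2 / K ^ 2 := by gcongr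
    _ = c * ‖x‖ * ‖x‖ := by field_simp
    _ ≤ schurComplement B hA q q := hSqq ▸ hcoer x

theorem surjective_saddlePointOp [CompleteSpace M] (hA : IsCoercive A) (hβ : 0 < β)
    (hB : ∀ q, β * ‖q‖ ≤ ‖B.flip q‖) : Function.Surjective (saddlePointOp A B) := by
  rintro ⟨j, f⟩
  have hS := isCoercive_schurComplement hA hβ hB
  set u₀ := hA.dualEquiv.symm j
  set p := hS.dualEquiv.symm (B u₀ - f)
  have hp : B (hA.dualEquiv.symm (B.flip p)) = B u₀ - f := by
    rw [← hS.apply_dualEquiv_symm (B u₀ - f)]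
    rfl
  refine ⟨(u₀ - hA.dualEquiv.symm (B.flip p), p), ?_⟩
  simp [u₀, hp]

theorem bijective_saddlePointOp [CompleteSpace M] (hA : IsCoercive A) (hβ : 0 < β)
    (hB : ∀ q, β * ‖q‖ ≤ ‖B.flip q‖) : Function.Bijective (saddlePointOp A B) :=
  ⟨injective_saddlePointOp hA hβ hB, surjective_saddlePointOp hA hβ hB⟩

end SaddlePoint

theorem apply_self_bounds_of_spectralEquiv {V : Type*} [SeminormedAddCommGroup V]
    {a ah : V → V → ℝ} {Ca α c₁ c₂ : ℝ} {v : V} (ha_cont : |a v v| ≤ Ca * ‖v‖ * ‖v‖)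
    (ha_coer : α * ‖v‖ ^ 2 ≤ a v v) (hc₁ : 0 ≤ c₁) (hc₁₂ : c₁ ≤ c₂)
    (hequiv : c₁ * a v v ≤ ah v v ∧ ah v v ≤ c₂ * a v v) :
    c₁ * α * ‖v‖ ^ 2 ≤ ah v v ∧ ah v v ≤ c₂ * Ca * ‖v‖ ^ 2 := by
  have ha_le : a v v ≤ Ca * ‖v‖ ^ 2 := by rw [sq, ← mul_assoc]; exact (le_abs_self _).trans ha_cont
  constructor
  · calc c₁ * α * ‖v‖ ^ 2 = c₁ * (α * ‖v‖ ^ 2) := by ring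
      _ ≤ c₁ * a v v := by gcongr
      _ ≤ ah v v := hequiv.1
  · calc ah v v ≤ c₂ * a v v := hequiv.2
      _ ≤ c₂ * (Ca * ‖v‖ ^ 2) := by gcongr; linarith
      _ = c₂ * Ca * ‖v‖ ^ 2 := by ring

theorem discrete_saddle_point_wellposed_general
    {V Q : Type*}
    [NormedAddCommGroup V] [InnerProductSpace ℝ V] [CompleteSpace V]
    [NormedAddCommGroup Q] [InnerProductSpace ℝ Q] [CompleteSpace Q]
    (a : V → V → ℝ) (b : V → Q → ℝ) (ah : V → V → ℝ)
    (ha_cont : ∃ Ca : ℝ, ∀ u v, |a u v| ≤ Ca * ‖u‖ * ‖v‖)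
    (ha_coer : ∃ α : ℝ, 0 < α ∧ ∀ v, α * ‖v‖ ^ 2 ≤ a v v)
    (hb_lin₁ : ∀ q, IsLinearMap ℝ fun v => b v q)
    (hb_lin₂ : ∀ v, IsLinearMap ℝ (b v))
    (hb_cont : ∃ Cb : ℝ, ∀ v q, |b v q| ≤ Cb * ‖v‖ * ‖q‖)
    (Vh : Submodule ℝ V) (hVh : IsClosed (Vh : Set V))
    (Qh : Submodule ℝ Q) (hQh : IsClosed (Qh : Set Q))
    -- discrete inf-sup condition with constant `β_h > 0`
    (hinfsup : ∃ βh : ℝ, 0 < βh ∧ ∀ q ∈ Qh,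
      βh * ‖q‖ ≤ ⨆ v : {v : Vh // v ≠ 0}, b (v : V) q / ‖(v : Vh)‖)
    (hah_symm : ∀ u v, ah u v = ah v u)
    (hah_lin₁ : ∀ v, IsLinearMap ℝ fun u => ah u v)
    (hah_lin₂ : ∀ u, IsLinearMap ℝ (ah u))
    -- spectral equivalence of `a_h` with `a` on `V_h`
    (c₁ c₂ : ℝ) (hc₁ : 0 < c₁) (hc₁₂ : c₁ ≤ c₂)
    (hequiv : ∀ v ∈ Vh, c₁ * a v v ≤ ah v v ∧ ah v v ≤ c₂ * a v v)
    (J : V →L[ℝ] ℝ) (F : Q →L[ℝ] ℝ) :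
    ∃! up : Vh × Qh,
      (∀ v ∈ Vh, ah (up.1 : V) v + b v (up.2 : Q) = J v) ∧
      (∀ q ∈ Qh, b (up.1 : V) q = F q) := by
  obtain ⟨Ca, hCa⟩ := ha_cont
  obtain ⟨α, hα, hαa⟩ := ha_coer
  obtain ⟨Cb, hCb⟩ := hb_cont
  obtain ⟨β, hβ, hβb⟩ := hinfsup
  have := hVh.completeSpace_coe
  have := hQh.completeSpace_coe
  have hdiag (v : Vh) : c₁ * α * ‖v‖ ^ 2 ≤ ah v v ∧ ah v v ≤ c₂ * Ca * ‖v‖ ^ 2 :=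
    apply_self_bounds_of_spectralEquiv (hCa v v) (hαa v) hc₁.le hc₁₂ (hequiv v v.2)
  set ahL := (LinearMap.mk₂OfIsLinearMap ah hah_lin₁ hah_lin₂).domRestrict₁₂ Vh Vh
  have hsymm : LinearMap.IsSymm ahL :=
    (LinearMap.isSymm_def.mpr fun u v => hah_symm u v).domRestrict Vh
  let Ah : Vh →L[ℝ] Vh →L[ℝ] ℝ := ahL.mkContinuous₂ (c₂ * Ca) fun u v =>
    LinearMap.BilinForm.abs_apply_le_of_apply_self_le hsymm
      (fun v => (by positivity : 0 ≤ c₁ * α * ‖v‖ ^ 2).trans (hdiag v).1) (fun v => (hdiag v).2) u v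
  let Bh : Vh →L[ℝ] Qh →L[ℝ] ℝ :=
    ((LinearMap.mk₂OfIsLinearMap b hb_lin₁ hb_lin₂).domRestrict₁₂ Vh Qh).mkContinuous₂ Cb
      fun v q => by simpa [LinearMap.domRestrict₁₂_apply] using hCb v q
  have hAh : IsCoercive Ah :=
    ⟨c₁ * α, by positivity, fun v => by
      simpa [Ah, ahL, LinearMap.domRestrict₁₂_apply, sq, mul_assoc] using (hdiag v).1⟩
  have hBh (q : Qh) : β * ‖q‖ ≤ ‖Bh.flip q‖ :=
    (hβb q q.2).trans (Bh.flip q).iSup_apply_div_norm_le_opNorm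
  refine (existsUnique_congr fun ⟨u, p⟩ => ?_).mp
    ((bijective_saddlePointOp hAh hβ hBh).existsUnique (J ∘L Vh.subtypeL, F ∘L Qh.subtypeL))
  simp [Prod.ext_iff, ContinuousLinearMap.ext_iff, Ah, ahL, Bh, LinearMap.domRestrict₁₂_apply,
    LinearMap.mkContinuous₂_apply]

/-- Well-posedness of the discrete VEM saddle-point problem: if `a` is symmetric
continuous coercive, `b` continuous and inf-sup stable on closed subspaces
`V_h ⊆ V`, `Q_h ⊆ Q`, and `a_h` is spectrally equivalent to `a` on `V_h`, then
the discrete saddle-point problem has a unique solution. -/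
theorem discrete_saddle_point_wellposed
    {V Q : Type*}
    [NormedAddCommGroup V] [InnerProductSpace ℝ V] [CompleteSpace V]
    [NormedAddCommGroup Q] [InnerProductSpace ℝ Q] [CompleteSpace Q]
    (a : V → V → ℝ) (b : V → Q → ℝ) (ah : V → V → ℝ)
    (ha_symm : ∀ u v, a u v = a v u)
    (ha_lin₁ : ∀ v, IsLinearMap ℝ fun u => a u v)
    (ha_lin₂ : ∀ u, IsLinearMap ℝ (a u))
    (ha_cont : ∃ Ca : ℝ, ∀ u v, |a u v| ≤ Ca * ‖u‖ * ‖v‖)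
    (ha_coer : ∃ α : ℝ, 0 < α ∧ ∀ v, α * ‖v‖ ^ 2 ≤ a v v)
    (hb_lin₁ : ∀ q, IsLinearMap ℝ fun v => b v q)
    (hb_lin₂ : ∀ v, IsLinearMap ℝ (b v))
    (hb_cont : ∃ Cb : ℝ, ∀ v q, |b v q| ≤ Cb * ‖v‖ * ‖q‖)
    (Vh : Submodule ℝ V) (hVh : IsClosed (Vh : Set V))
    (Qh : Submodule ℝ Q) (hQh : IsClosed (Qh : Set Q))
    -- discrete inf-sup condition with constant `β_h > 0`
    (hinfsup : ∃ βh : ℝ, 0 < βh ∧ ∀ q ∈ Qh,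
      βh * ‖q‖ ≤ ⨆ v : {v : Vh // v ≠ 0}, b (v : V) q / ‖(v : Vh)‖)
    (hah_symm : ∀ u v, ah u v = ah v u)
    (hah_lin₁ : ∀ v, IsLinearMap ℝ fun u => ah u v)
    (hah_lin₂ : ∀ u, IsLinearMap ℝ (ah u))
    -- spectral equivalence of `a_h` with `a` on `V_h`
    (c₁ c₂ : ℝ) (hc₁ : 0 < c₁) (hc₁₂ : c₁ ≤ c₂)
    (hequiv : ∀ v ∈ Vh, c₁ * a v v ≤ ah v v ∧ ah v v ≤ c₂ * a v v)
    (J : V →L[ℝ] ℝ) (F : Q →L[ℝ] ℝ) :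
    ∃! up : Vh × Qh,
      (∀ v ∈ Vh, ah (up.1 : V) v + b v (up.2 : Q) = J v) ∧
      (∀ q ∈ Qh, b (up.1 : V) q = F q) :=
  discrete_saddle_point_wellposed_general a b ah ha_cont ha_coer hb_lin₁ hb_lin₂ hb_cont Vh hVh Qh
    hQh hinfsup hah_symm hah_lin₁ hah_lin₂ c₁ c₂ hc₁ hc₁₂ hequiv J F
end
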